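/- Let γ₁, γ₂ : ℝ → ℝ² be continuous maps and q₁, q₂ ∈ ℤ² be integer vectors that are linearly independent over ℝ, such that γ_i(t+1) = γ_i(t) + q_i for all t ∈ ℝ and i = 1, 2 (so γ₁, γ₂ are lifts of closed paths on the torus ℝ²/ℤ² whose homotopy classes q₁, q₂ are not parallel). Then the projected paths intersect: there exist s, t ∈ ℝ such that γ₁(t) − γ₂(s) ∈ ℤ². -/

import Mathlib

open MeasureTheory Filter Topology
open scoped RealInnerProductSpace

noncomputable section

/-- `ℝⁿ` with the Euclidean metric. -/
abbrev Rn (n : ℕ) : Type := EuclideanSpace ℝ (Fin n)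

/-- The `n`-torus, the `n`-fold product of the additive circle `ℝ/ℤ`. -/
abbrev Tn (n : ℕ) : Type := Fin n → AddCircle (1 : ℝ)

/-- The lattice vector of `ℝⁿ` corresponding to `v ∈ ℤⁿ`. -/
def latVec {n : ℕ} (v : Fin n → ℤ) : Rn n := WithLp.toLp 2 (fun i => (v i : ℝ))

/-- The quotient map `π : ℝⁿ → Tⁿ`. -/
def torusProj (n : ℕ) : Rn n → Tn n := fun x i => (x i : AddCircle (1 : ℝ))

/-- The half-open unit cube `[0,1)ⁿ`. -/
def unitCube (n : ℕ) : Set (Rn n) := {x | ∀ i, x i ∈ Set.Ico (0 : ℝ) 1}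

/-- A test function: smooth and `ℤⁿ`-periodic. -/
def IsTestFun {n : ℕ} (φ : Rn n → ℝ) : Prop :=
  ContDiff ℝ (⊤ : ℕ∞) φ ∧ ∀ (x : Rn n) (v : Fin n → ℤ), φ (x + latVec v) = φ x

/-- The quadratic form `v ⬝ A v` of a matrix `A`. -/
def qf {n : ℕ} (A : Matrix (Fin n) (Fin n) ℝ) (v : Rn n) : ℝ :=
  ∑ i, ∑ j, v i * A i j * v j

/-- The Dirichlet energy of a test function `φ` with slope `p` in the medium `(μ, σ)`. -/
def energy {n : ℕ} (μ : Measure (Rn n)) (σ : Rn n → Matrix (Fin n) (Fin n) ℝ)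
    (φ : Rn n → ℝ) (p : Rn n) : ℝ :=
  ∫ x in unitCube n, qf (σ x) (gradient φ x + p) ∂μ

/-- The effective conductance `C_{μ,σ}(p)` of a medium. -/
def effC {n : ℕ} (μ : Measure (Rn n)) (σ : Rn n → Matrix (Fin n) (Fin n) ℝ)
    (p : Rn n) : ℝ :=
  sInf {c | ∃ φ : Rn n → ℝ, IsTestFun φ ∧ c = energy μ σ φ p}

/-- A medium in periodic encoding. -/
structure IsMedium {n : ℕ} (μ : Measure (Rn n))
    (σ : Rn n → Matrix (Fin n) (Fin n) ℝ) : Prop where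
  invariant : ∀ v : Fin n → ℤ, μ.map (· + latVec v) = μ
  finiteCube : μ (unitCube n) < ⊤
  meas : ∀ i j, Measurable fun x => σ x i j
  periodic : ∀ (x : Rn n) (v : Fin n → ℤ), σ (x + latVec v) = σ x
  symm : ∀ x, (σ x).IsSymm
  posSemidef : ∀ᵐ x ∂μ, (σ x).PosSemidef
  traceOne : ∀ᵐ x ∂μ, (σ x).trace = 1

/-- The support of a Borel measure: the set of points all of whose
open neighborhoods have positive measure. -/
def msupport {α : Type*} [TopologicalSpace α] [MeasurableSpace α] (μ : Measure α) :
    Set α :=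
  {x | ∀ U : Set α, IsOpen U → x ∈ U → 0 < μ U}

/-- The pushforward to the torus of the restriction of `μ` to the unit cube. -/
def torusMeasure {n : ℕ} (μ : Measure (Rn n)) : Measure (Tn n) :=
  (μ.restrict (unitCube n)).map (torusProj n)

/-- The set of homotopy classes of closed loops lying in a periodic set `Γ ⊆ ℝⁿ`. -/
def homotopySet {n : ℕ} (Γ : Set (Rn n)) : Set (Fin n → ℤ) :=
  {v | ∃ γ : ℝ → Rn n, ContinuousOn γ (Set.Icc 0 1) ∧
    (∀ t ∈ Set.Icc (0 : ℝ) 1, γ t ∈ Γ) ∧ γ 1 = γ 0 + latVec v}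

/-- The set of homotopy classes of closed loops lying in a subset `E` of the torus. -/
def homotopySetT {n : ℕ} (E : Set (Tn n)) : Set (Fin n → ℤ) :=
  {v | ∃ γ : ℝ → Rn n, ContinuousOn γ (Set.Icc 0 1) ∧
    (∀ t ∈ Set.Icc (0 : ℝ) 1, torusProj n (γ t) ∈ E) ∧ γ 1 = γ 0 + latVec v}

/-- The Dirichlet energy of a test function on a coercive periodic network `(Γ, a)`. -/
def netEnergy {n : ℕ} (Γ : Set (Rn n)) (a : Rn n → ℝ) (φ : Rn n → ℝ) (p : Rn n) : ℝ :=
  ∫ x in Γ ∩ unitCube n, ‖gradient φ x + p‖ ^ 2 * a x ∂μH[1]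

/-- The effective conductance `C(p)` of a coercive periodic network `(Γ, a)`. -/
def netC {n : ℕ} (Γ : Set (Rn n)) (a : Rn n → ℝ) (p : Rn n) : ℝ :=
  sInf {c | ∃ φ : Rn n → ℝ, IsTestFun φ ∧ c = netEnergy Γ a φ p}


open Complex Real Set

lemma s17_tele (v : ℕ → ℂ) (hv : ∀ j, v j ≠ 0) (n : ℕ) :
    ∏ j ∈ Finset.range n, (v (j+1) / v j) = v n / v 0 := by
  induction n with
  | zero => simp [div_self (hv 0)]
  | succ n ih =>
      rw [Finset.prod_range_succ, ih, div_mul_div_comm]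
      rw [div_eq_div_iff (by exact mul_ne_zero (hv 0) (hv n)) (hv 0)]
      ring

lemma s17_exp_arg {z : ℂ} (hz : ‖z‖ = 1) :
    Complex.exp (Complex.arg z * I) = z := by
  have := Complex.norm_mul_exp_arg_mul_I z
  rwa [hz, Complex.ofReal_one, one_mul] at this

lemma s17_slit {z : ℂ} (hz : ‖z‖ = 1) (hz' : z ≠ -1) :
    z ∈ Complex.slitPlane := by
  rw [Complex.mem_slitPlane_iff]
  by_contra h
  push_neg at h
  obtain ⟨h1, h2⟩ := h
  have hzre : z = (z.re : ℂ) := by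
    apply Complex.ext <;> simp [h2]
  rw [hzre, Complex.norm_real, Real.norm_eq_abs] at hz
  have : z.re = -1 := by
    rcases abs_eq (by norm_num : (0:ℝ) ≤ 1) |>.mp hz with h | h
    · linarith
    · exact h
  exact hz' (by rw [hzre, this]; norm_num)

lemma s17_ratio_slit {u v : ℂ} (hu : ‖u‖ = 1) (hv : ‖v‖ = 1)
    (h : dist u v < 2) : u / v ∈ Complex.slitPlane := by
  apply s17_slit
  · simp [norm_div, hu, hv]
  · intro hc
    have hvne : v ≠ 0 := by intro h0; simp [h0] at hv
    have : u = -v := by field_simp at hc; linear_combination hc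
    rw [this, Complex.dist_eq] at h
    have : ‖-v - v‖ = 2 := by
      have : -v - v = -(2*v) := by ring
      rw [this, norm_neg, norm_mul, hv]
      simp
    linarith

lemma s17_min_dist {a b c : ℝ} (h : b ≤ c) : |min a c - min a b| ≤ c - b := by
  rcases le_total a b with hab | hab
  · rw [min_eq_left (hab.trans h), min_eq_left hab]; simpa using h
  · rcases le_total a c with hac | hac
    · rw [min_eq_left hac, min_eq_right hab]
      rw [_root_.abs_of_nonneg (by linarith)]; linarith
    · rw [min_eq_right hac, min_eq_right hab]
      rw [_root_.abs_of_nonneg (by linarith)]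

lemma s17_lift_diff {a b : ℝ} {w : ℂ} (ha : Complex.exp (a*I) = w)
    (hb : Complex.exp (b*I) = w) : ∃ k : ℤ, a - b = 2 * π * k := by
  have h1 : Complex.exp ((a : ℂ)*I - (b:ℂ)*I) = 1 := by
    rw [Complex.exp_sub, ha, hb, div_self]
    rw [← hb]; exact Complex.exp_ne_zero _
  rw [Complex.exp_eq_one_iff] at h1
  obtain ⟨k, hk⟩ := h1
  refine ⟨k, ?_⟩
  have : ((a:ℂ) - b) * I = ((2*π*(k:ℝ) : ℝ) : ℂ) * I := by
    push_cast
    linear_combination hk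
  have h2 : ((a:ℂ) - b) = ((2*π*(k:ℝ) : ℝ) : ℂ) := by
    exact mul_right_cancel₀ Complex.I_ne_zero this
  exact_mod_cast h2

lemma s17_int_const (f : ℝ → ℝ) (R : ℝ) (hR : 0 ≤ R)
    (hf : ContinuousOn f (Set.Icc 0 R))
    (hv : ∀ t ∈ Set.Icc 0 R, ∃ k : ℤ, f t = 2 * π * k) : f 0 = f R := by
  have h0 : (0:ℝ) ∈ Set.Icc 0 R := by simp [hR]
  have hRm : R ∈ Set.Icc 0 R := by simp [hR]
  obtain ⟨k0, hk0⟩ := hv 0 h0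
  obtain ⟨k1, hk1⟩ := hv R hRm
  by_contra hne
  have hkk : k0 ≠ k1 := by rintro rfl; exact hne (hk0.trans hk1.symm)
  have key : ∀ (m m' : ℤ), m < m' → f 0 = 2*π*m → f R = 2*π*m' → False := by
    intro m m' hm hm0 hm1
    have hlt : f 0 < 2*π*m + π := by rw [hm0]; linarith [Real.pi_pos]
    have hlt2 : 2*π*m + π < f R := by
      rw [hm1]
      have : (m:ℝ) + 1 ≤ m' := by exact_mod_cast hm
      nlinarith [Real.pi_pos]
    have : (2*π*m + π) ∈ Set.Ioo (f 0) (f R) := ⟨hlt, hlt2⟩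
    have := intermediate_value_Ioo h0.2 hf this
    obtain ⟨t, ht, hft⟩ := this
    obtain ⟨k, hk⟩ := hv t (Set.mem_Icc.mpr ⟨le_of_lt ht.1, le_of_lt ht.2⟩)
    rw [hk] at hft
    have : (k:ℝ) - m = 1/2 := by
      have hpi := Real.pi_pos
      field_simp at hft ⊢
      nlinarith
    rcases le_or_gt k m with h | h
    · have : (k:ℝ) ≤ m := by exact_mod_cast h
      linarith
    · have : (m:ℝ) + 1 ≤ k := by exact_mod_cast h
      linarith
  rcases lt_or_gt_of_ne hkk with h | h
  · exact key k0 k1 h hk0 hk1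
  · -- f R < f 0
    have hlt : f R < 2*π*k1 + π := by rw [hk1]; linarith [Real.pi_pos]
    have hlt2 : 2*π*k1 + π < f 0 := by
      rw [hk0]
      have : (k1:ℝ) + 1 ≤ k0 := by exact_mod_cast h
      nlinarith [Real.pi_pos]
    have hmem : (2*π*k1 + π) ∈ Set.Ioo (f R) (f 0) := ⟨hlt, hlt2⟩
    obtain ⟨t, ht, hft⟩ := intermediate_value_Ioo' h0.2 hf hmem
    obtain ⟨k, hk⟩ := hv t (Set.mem_Icc.mpr ⟨le_of_lt ht.1, le_of_lt ht.2⟩)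
    rw [hk] at hft
    have hhalf : (k:ℝ) - k1 = 1/2 := by
      have hpi := Real.pi_pos
      field_simp at hft ⊢
      nlinarith
    rcases le_or_gt k k1 with hh | hh
    · have : (k:ℝ) ≤ k1 := by exact_mod_cast hh
      linarith
    · have : (k1:ℝ) + 1 ≤ k := by exact_mod_cast hh
      linarith

lemma s17_lift2d (u : ℝ × ℝ → ℂ) (hu : Continuous u) (hunit : ∀ x, ‖u x‖ = 1)
    (R : ℝ) (hR : 0 < R) :
    ∃ Θ : ℝ × ℝ → ℝ, Continuous Θ ∧
      ∀ x ∈ Set.Icc (0:ℝ) R ×ˢ Set.Icc (0:ℝ) R, Complex.exp (Θ x * I) = u x := by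
  have hne : ∀ x, u x ≠ 0 := by
    intro x hx; have := hunit x; rw [hx] at this; simp at this
  set K : Set (ℝ × ℝ) := Set.Icc (0:ℝ) R ×ˢ Set.Icc (0:ℝ) R with hKdef
  have hK : IsCompact K := isCompact_Icc.prod isCompact_Icc
  have hUC : UniformContinuousOn u K :=
    hK.uniformContinuousOn_of_continuous hu.continuousOn
  rw [Metric.uniformContinuousOn_iff] at hUC
  obtain ⟨δ, hδ, hδ'⟩ := hUC 1 one_pos
  obtain ⟨n, hn⟩ := exists_nat_gt (R / δ)
  have hn0 : 0 < (n:ℝ) := lt_of_le_of_lt (by positivity) hn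
  have hstep : R / n < δ := by
    rw [div_lt_iff₀ hn0]
    calc R = (R/δ) * δ := by field_simp
    _ < n * δ := mul_lt_mul_of_pos_right hn hδ
    _ = δ * n := by ring
  set p : ℕ → ℝ := fun j => R * j / n with hp
  have hp0 : p 0 = 0 := by simp [hp]
  have hpn : p n = R := by simp only [hp]; exact mul_div_cancel_right₀ R hn0.ne'
  have hpnonneg : ∀ j, 0 ≤ p j := fun j => by
    simp only [hp]; positivity
  have hpmono : ∀ j : ℕ, p j ≤ p (j+1) := by
    intro j; simp only [hp]
    rw [div_le_div_iff₀ hn0 hn0]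
    push_cast
    nlinarith [hR.le, hn0]
  have hpdiff : ∀ j : ℕ, p (j+1) - p j = R / n := by
    intro j; simp only [hp]; push_cast; field_simp; ring
  -- clamp
  set c : ℝ → ℝ := fun x => max 0 (min x R) with hc
  have hc_cont : Continuous c := by fun_prop
  have hc_mem : ∀ x, c x ∈ Set.Icc (0:ℝ) R := by
    intro x
    constructor
    · exact le_max_left _ _
    · exact max_le hR.le (min_le_right _ _)
  have hc_eq : ∀ x ∈ Set.Icc (0:ℝ) R, c x = x := by
    intro x hx
    simp only [hc]
    rw [min_eq_left hx.2, max_eq_right hx.1]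
  -- membership of grid points
  have hmem1 : ∀ (a : ℝ), a ∈ Set.Icc (0:ℝ) R → ∀ j : ℕ, min a (p j) ∈ Set.Icc (0:ℝ) R := by
    intro a ha j
    exact ⟨le_min ha.1 (hpnonneg j), (min_le_left _ _).trans ha.2⟩
  -- key closeness : ratio in slit plane
  have hclose : ∀ (a b : ℝ), a ∈ Set.Icc (0:ℝ) R → b ∈ Set.Icc (0:ℝ) R →
      ∀ j : ℕ, ∀ (mk : ℝ → ℝ × ℝ),
      ((mk = fun y => (y, b)) ∨ (mk = fun y => (b, y))) →
      u (mk (min a (p (j+1)))) / u (mk (min a (p j))) ∈ Complex.slitPlane := by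
    intro a b ha hb j mk hmk
    have h1 : min a (p (j+1)) ∈ Set.Icc (0:ℝ) R := hmem1 a ha (j+1)
    have h2 : min a (p j) ∈ Set.Icc (0:ℝ) R := hmem1 a ha j
    have hdist : dist (min a (p (j+1))) (min a (p j)) < δ := by
      rw [Real.dist_eq]
      calc |min a (p (j+1)) - min a (p j)| ≤ p (j+1) - p j := s17_min_dist (hpmono j)
      _ = R / n := hpdiff j
      _ < δ := hstep
    have hKmem : ∀ y ∈ Set.Icc (0:ℝ) R, mk y ∈ K := by
      intro y hy
      rcases hmk with rfl | rfl
      · exact ⟨hy, hb⟩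
      · exact ⟨hb, hy⟩
    have hdd : dist (mk (min a (p (j+1)))) (mk (min a (p j))) < δ := by
      rcases hmk with rfl | rfl
      · rw [Prod.dist_eq]; simp only [dist_self]; exact max_lt hdist hδ
      · rw [Prod.dist_eq]; simp only [dist_self]; exact max_lt hδ hdist
    have := hδ' _ (hKmem _ h1) _ (hKmem _ h2) hdd
    exact s17_ratio_slit (hunit _) (hunit _) (lt_trans this one_lt_two)
  -- the lift
  refine ⟨fun x =>
      Complex.arg (u (0,0))
      + ∑ j ∈ Finset.range n,
          Complex.arg (u (min (c x.1) (p (j+1)), 0) / u (min (c x.1) (p j), 0))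
      + ∑ j ∈ Finset.range n,
          Complex.arg (u (c x.1, min (c x.2) (p (j+1))) / u (c x.1, min (c x.2) (p j))),
      ?_, ?_⟩
  · apply Continuous.add
    apply Continuous.add continuous_const
    · apply continuous_finset_sum
      intro j _
      have hg : Continuous (fun x : ℝ × ℝ =>
          u (min (c x.1) (p (j+1)), 0) / u (min (c x.1) (p j), 0)) := by
        apply Continuous.div
        · exact hu.comp (((hc_cont.comp continuous_fst).min continuous_const).prodMk
            continuous_const)
        · exact hu.comp (((hc_cont.comp continuous_fst).min continuous_const).prodMk
            continuous_const)
        · intro x; exact hne _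
      rw [continuous_iff_continuousAt]
      intro x
      refine (Complex.continuousAt_arg ?_).comp hg.continuousAt
      exact hclose (c x.1) 0 (hc_mem _) ⟨le_refl _, hR.le⟩ j _ (Or.inl rfl)
    · apply continuous_finset_sum
      intro j _
      have hg : Continuous (fun x : ℝ × ℝ =>
          u (c x.1, min (c x.2) (p (j+1))) / u (c x.1, min (c x.2) (p j))) := by
        apply Continuous.div
        · exact hu.comp ((hc_cont.comp continuous_fst).prodMk
            ((hc_cont.comp continuous_snd).min continuous_const))
        · exact hu.comp ((hc_cont.comp continuous_fst).prodMk
            ((hc_cont.comp continuous_snd).min continuous_const))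
        · intro x; exact hne _
      rw [continuous_iff_continuousAt]
      intro x
      refine (Complex.continuousAt_arg ?_).comp hg.continuousAt
      exact hclose (c x.2) (c x.1) (hc_mem _) (hc_mem _) j _ (Or.inr rfl)
  · intro x hx
    rw [Set.mem_prod] at hx
    obtain ⟨hs, ht⟩ := hx
    have hcx1 : c x.1 = x.1 := hc_eq _ hs
    have hcx2 : c x.2 = x.2 := hc_eq _ ht
    simp only [hcx1, hcx2]
    set v1 : ℕ → ℂ := fun j => u (min x.1 (p j), 0) with hv1
    set v2 : ℕ → ℂ := fun j => u (x.1, min x.2 (p j)) with hv2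
    set S1 : ℝ := ∑ j ∈ Finset.range n, Complex.arg (v1 (j+1) / v1 j) with hS1
    set S2 : ℝ := ∑ j ∈ Finset.range n, Complex.arg (v2 (j+1) / v2 j) with hS2
    have hcast : ((Complex.arg (u (0,0)) + S1 + S2 : ℝ) : ℂ) * I
        = (Complex.arg (u (0,0)) : ℂ) * I + (S1 : ℂ) * I + (S2 : ℂ) * I := by
      push_cast; ring
    rw [hcast, Complex.exp_add, Complex.exp_add]
    have habs : ∀ (w : ℂ), w ≠ 0 → ‖w / w‖ = 1 := by
      intro w hw; rw [div_self hw]; simp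
    have hterm : ∀ (v : ℕ → ℂ), (∀ j, v j ≠ 0) → (∀ j, ‖v j‖ = 1) →
        Complex.exp ((↑(∑ j ∈ Finset.range n, Complex.arg (v (j+1) / v j)) : ℂ) * I)
          = v n / v 0 := by
      intro v hv hva
      rw [Complex.ofReal_sum, Finset.sum_mul, Complex.exp_sum]
      rw [← s17_tele v hv n]
      apply Finset.prod_congr rfl
      intro j _
      apply s17_exp_arg
      rw [norm_div, hva, hva, div_one]
    have h1 : Complex.exp ((S1 : ℂ) * I) = v1 n / v1 0 :=
      hterm v1 (fun j => hne _) (fun j => hunit _)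
    have h2 : Complex.exp ((S2 : ℂ) * I) = v2 n / v2 0 :=
      hterm v2 (fun j => hne _) (fun j => hunit _)
    rw [h1, h2, s17_exp_arg (hunit _)]
    have e1 : v1 n = u (x.1, 0) := by
      simp only [hv1, hpn, min_eq_left hs.2]
    have e2 : v1 0 = u (0, 0) := by
      simp only [hv1, hp0, min_eq_right hs.1]
    have e3 : v2 n = u (x.1, x.2) := by
      simp only [hv2, hpn, min_eq_left ht.2]
    have e4 : v2 0 = u (x.1, 0) := by
      simp only [hv2, hp0, min_eq_right ht.1]
    rw [e1, e2, e3, e4]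
    rw [Prod.mk.eta]
    field_simp
    exact mul_div_cancel_left₀ (u x) (mul_ne_zero (hne _) (hne _))

lemma s17_no_avoid (F : ℝ × ℝ → ℂ) (hF : Continuous F) (R : ℝ) (hR : 0 < R)
    (h0 : ∀ x, F x ≠ 0)
    (hU : ∀ t ∈ Set.Icc (0:ℝ) R, 0 < (F (0,t)).im)
    (hRt : ∀ s ∈ Set.Icc (0:ℝ) R, 0 < (F (s,R)).re)
    (hD : ∀ t ∈ Set.Icc (0:ℝ) R, (F (R,t)).im < 0)
    (hL : ∀ s ∈ Set.Icc (0:ℝ) R, (F (s,0)).re < 0) : False := by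
  set u : ℝ × ℝ → ℂ := fun x => F x / (‖F x‖ : ℂ) with hudef
  have habsne : ∀ x, ((‖F x‖ : ℂ)) ≠ 0 := by
    intro x
    simp only [ne_eq, Complex.ofReal_eq_zero, norm_eq_zero]
    exact h0 x
  have hu : Continuous u := by
    apply hF.div
    · exact Complex.continuous_ofReal.comp (continuous_norm.comp hF)
    · exact habsne
  have hunit : ∀ x, ‖u x‖ = 1 := by
    intro x
    simp only [hudef, norm_div, Complex.norm_real, Real.norm_eq_abs]
    rw [_root_.abs_of_nonneg (norm_nonneg _), div_self]
    simp only [ne_eq, norm_eq_zero]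
    exact h0 x
  obtain ⟨Θ, hΘc, hΘ⟩ := s17_lift2d u hu hunit R hR
  have harg : ∀ x : ℝ × ℝ, Complex.exp ((Complex.arg (F x) : ℂ) * I) = u x := by
    intro x
    have h := Complex.norm_mul_exp_arg_mul_I (F x)
    show Complex.exp ((Complex.arg (F x) : ℂ) * I) = F x / (‖F x‖ : ℂ)
    rw [eq_div_iff (habsne x), mul_comm]
    exact h
  have hargneg : ∀ x : ℝ × ℝ,
      Complex.exp ((↑(Complex.arg (-F x) - π) : ℂ) * I) = u x := by
    intro x
    have h1 : Complex.exp ((Complex.arg (-F x) : ℂ) * I) = - u x := by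
      have h := Complex.norm_mul_exp_arg_mul_I (-F x)
      rw [norm_neg] at h
      show Complex.exp ((Complex.arg (-F x) : ℂ) * I)
          = -(F x / (‖F x‖ : ℂ))
      rw [neg_div' (‖F x‖ : ℂ) (F x), eq_div_iff (habsne x), mul_comm]
      exact h
    have : ((↑(Complex.arg (-F x) - π) : ℂ)) * I
        = (Complex.arg (-F x) : ℂ) * I - (π:ℂ) * I := by push_cast; ring
    rw [this, Complex.exp_sub, h1, Complex.exp_pi_mul_I]
    simp
  have hmem0 : (0:ℝ) ∈ Set.Icc (0:ℝ) R := ⟨le_refl _, hR.le⟩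
  have hmemR : R ∈ Set.Icc (0:ℝ) R := ⟨hR.le, le_refl _⟩
  have hKmem : ∀ a b : ℝ, a ∈ Set.Icc (0:ℝ) R → b ∈ Set.Icc (0:ℝ) R →
      (a, b) ∈ Set.Icc (0:ℝ) R ×ˢ Set.Icc (0:ℝ) R := by
    intro a b ha hb; exact ⟨ha, hb⟩
  -- the four edge functions
  set g1 : ℝ → ℝ := fun t => Θ (0, t) - Complex.arg (F (0, t)) with hg1
  set g2 : ℝ → ℝ := fun s => Θ (s, R) - Complex.arg (F (s, R)) with hg2
  set g3 : ℝ → ℝ := fun t => Θ (R, t) - Complex.arg (F (R, t)) with hg3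
  set g4 : ℝ → ℝ := fun s => Θ (s, 0) - (Complex.arg (-F (s, 0)) - π) with hg4
  -- continuity
  have hcont_arg : ∀ (φ : ℝ → ℝ × ℝ), Continuous φ →
      (∀ t ∈ Set.Icc (0:ℝ) R, F (φ t) ∈ Complex.slitPlane) →
      ContinuousOn (fun t => Complex.arg (F (φ t))) (Set.Icc 0 R) := by
    intro φ hφ hslit t ht
    have hFc : ContinuousAt (fun t => F (φ t)) t := (hF.comp hφ).continuousAt
    exact (ContinuousAt.comp (f := fun t => F (φ t))
      (Complex.continuousAt_arg (hslit t ht)) hFc).continuousWithinAt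
  have hc1 : ContinuousOn g1 (Set.Icc 0 R) := by
    apply ContinuousOn.sub
    · exact (hΘc.comp (by fun_prop)).continuousOn
    · exact hcont_arg (fun t => ((0:ℝ), t)) (by fun_prop)
        (fun t ht => Or.inr (ne_of_gt (hU t ht)))
  have hc2 : ContinuousOn g2 (Set.Icc 0 R) := by
    apply ContinuousOn.sub
    · exact (hΘc.comp (by fun_prop)).continuousOn
    · exact hcont_arg (fun s => (s, R)) (by fun_prop)
        (fun s hs => Or.inl (hRt s hs))
  have hc3 : ContinuousOn g3 (Set.Icc 0 R) := by
    apply ContinuousOn.sub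
    · exact (hΘc.comp (by fun_prop)).continuousOn
    · exact hcont_arg (fun t => (R, t)) (by fun_prop)
        (fun t ht => Or.inr (ne_of_lt (hD t ht)))
  have hc4 : ContinuousOn g4 (Set.Icc 0 R) := by
    apply ContinuousOn.sub
    · exact (hΘc.comp (by fun_prop)).continuousOn
    · apply ContinuousOn.sub _ continuousOn_const
      intro s hs
      have hslit : -F (s, 0) ∈ Complex.slitPlane := by
        left; simp only [Complex.neg_re]; linarith [hL s hs]
      have hFc : ContinuousAt (fun s : ℝ => -F (s, 0)) s :=
        ((hF.comp (by fun_prop : Continuous (fun s : ℝ => (s, (0:ℝ))))).neg).continuousAt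
      exact (ContinuousAt.comp (f := fun s : ℝ => -F (s, 0))
        (Complex.continuousAt_arg hslit) hFc).continuousWithinAt
  -- integer values
  have hv1 : ∀ t ∈ Set.Icc (0:ℝ) R, ∃ k : ℤ, g1 t = 2 * π * k := by
    intro t ht
    exact s17_lift_diff (hΘ (0, t) (hKmem _ _ hmem0 ht)) (harg (0, t))
  have hv2 : ∀ s ∈ Set.Icc (0:ℝ) R, ∃ k : ℤ, g2 s = 2 * π * k := by
    intro s hs
    exact s17_lift_diff (hΘ (s, R) (hKmem _ _ hs hmemR)) (harg (s, R))
  have hv3 : ∀ t ∈ Set.Icc (0:ℝ) R, ∃ k : ℤ, g3 t = 2 * π * k := by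
    intro t ht
    exact s17_lift_diff (hΘ (R, t) (hKmem _ _ hmemR ht)) (harg (R, t))
  have hv4 : ∀ s ∈ Set.Icc (0:ℝ) R, ∃ k : ℤ, g4 s = 2 * π * k := by
    intro s hs
    exact s17_lift_diff (hΘ (s, 0) (hKmem _ _ hs hmem0)) (hargneg (s, 0))
  have e1 : g1 0 = g1 R := s17_int_const g1 R hR.le hc1 hv1
  have e2 : g2 0 = g2 R := s17_int_const g2 R hR.le hc2 hv2
  have e3 : g3 0 = g3 R := s17_int_const g3 R hR.le hc3 hv3
  have e4 : g4 0 = g4 R := s17_int_const g4 R hR.le hc4 hv4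
  -- corners
  have c1 : g1 R = g2 0 := rfl
  have c2 : g2 R = g3 R := rfl
  have c3 : g3 0 = g4 R := by
    have him : (F (R, 0)).im < 0 := hD 0 hmem0
    simp only [hg3, hg4, Complex.arg_neg_eq_arg_add_pi_of_im_neg him]
    ring
  have c4 : g4 0 = g1 0 + 2 * π := by
    have him : 0 < (F (0, 0)).im := hU 0 hmem0
    simp only [hg4, hg1, Complex.arg_neg_eq_arg_sub_pi_of_im_pos him]
    ring
  have : (2:ℝ) * π = 0 := by linarith
  have := Real.pi_pos
  linarith

/-- Two closed paths on the torus `ℝ²/ℤ²` whose homotopy classes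
`q₁, q₂ ∈ ℤ²` are not parallel (nonzero determinant) must intersect: given periodic lifts
`γ₁, γ₂`, there are parameters `s, t` with `γ₁(t) − γ₂(s) ∈ ℤ²`. -/
theorem statement17 (γ₁ γ₂ : ℝ → Rn 2) (q₁ q₂ : Fin 2 → ℤ)
    (h₁ : Continuous γ₁) (h₂ : Continuous γ₂)
    (hdet : q₁ 0 * q₂ 1 - q₁ 1 * q₂ 0 ≠ 0)
    (hp₁ : ∀ t : ℝ, γ₁ (t + 1) = γ₁ t + latVec q₁)
    (hp₂ : ∀ t : ℝ, γ₂ (t + 1) = γ₂ t + latVec q₂) :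
    ∃ s t : ℝ, ∃ v : Fin 2 → ℤ, γ₁ t - γ₂ s = latVec v := by
  by_contra hcon
  push_neg at hcon
  -- determinant
  set d : ℝ := (q₁ 0 : ℝ) * (q₂ 1 : ℝ) - (q₁ 1 : ℝ) * (q₂ 0 : ℝ) with hddef
  have hd : d ≠ 0 := by
    intro h
    apply hdet
    have : ((q₁ 0 * q₂ 1 - q₁ 1 * q₂ 0 : ℤ) : ℝ) = 0 := by push_cast; linarith
    exact_mod_cast this
  -- coordinates
  set a : ℝ × ℝ → ℝ := fun x => γ₁ x.2 0 - γ₂ x.1 0 with hadef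
  set b : ℝ × ℝ → ℝ := fun x => γ₁ x.2 1 - γ₂ x.1 1 with hbdef
  have ha : Continuous a := by
    apply Continuous.sub
    · exact (continuous_apply (0 : Fin 2)).comp ((PiLp.continuous_ofLp (p := 2) (β := fun _ : Fin 2 => ℝ)).comp (h₁.comp continuous_snd))
    · exact (continuous_apply (0 : Fin 2)).comp ((PiLp.continuous_ofLp (p := 2) (β := fun _ : Fin 2 => ℝ)).comp (h₂.comp continuous_fst))
  have hb : Continuous b := by
    apply Continuous.sub
    · exact (continuous_apply (1 : Fin 2)).comp ((PiLp.continuous_ofLp (p := 2) (β := fun _ : Fin 2 => ℝ)).comp (h₁.comp continuous_snd))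
    · exact (continuous_apply (1 : Fin 2)).comp ((PiLp.continuous_ofLp (p := 2) (β := fun _ : Fin 2 => ℝ)).comp (h₂.comp continuous_fst))
  -- the complex map
  set φ : ℝ × ℝ → ℂ := fun x =>
    (((((q₂ 1 : ℝ) * a x - (q₂ 0 : ℝ) * b x) / d : ℝ) : ℂ)
      + ((((q₁ 0 : ℝ) * b x - (q₁ 1 : ℝ) * a x) / d : ℝ) : ℂ) * I) with hφdef
  have hφc : Continuous φ := by
    apply Continuous.add
    · exact Complex.continuous_ofReal.comp (by fun_prop)
    · exact (Complex.continuous_ofReal.comp (by fun_prop)).mul continuous_const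
  -- translation identities for coordinates
  have ha1 : ∀ x : ℝ × ℝ, a (x.1, x.2 + 1) = a x + (q₁ 0 : ℝ) := by
    intro x
    have := congrArg (fun v : Rn 2 => v 0) (hp₁ x.2)
    simp only at this
    simp only [hadef]
    rw [this]
    show γ₁ x.2 0 + ((q₁ 0 : ℤ) : ℝ) - γ₂ x.1 0 = _
    ring
  have hb1 : ∀ x : ℝ × ℝ, b (x.1, x.2 + 1) = b x + (q₁ 1 : ℝ) := by
    intro x
    have := congrArg (fun v : Rn 2 => v 1) (hp₁ x.2)
    simp only at this
    simp only [hbdef]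
    rw [this]
    show γ₁ x.2 1 + ((q₁ 1 : ℤ) : ℝ) - γ₂ x.1 1 = _
    ring
  have ha2 : ∀ x : ℝ × ℝ, a (x.1 + 1, x.2) = a x - (q₂ 0 : ℝ) := by
    intro x
    have := congrArg (fun v : Rn 2 => v 0) (hp₂ x.1)
    simp only at this
    simp only [hadef]
    rw [this]
    show γ₁ x.2 0 - (γ₂ x.1 0 + ((q₂ 0 : ℤ) : ℝ)) = _
    ring
  have hb2 : ∀ x : ℝ × ℝ, b (x.1 + 1, x.2) = b x - (q₂ 1 : ℝ) := by
    intro x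
    have := congrArg (fun v : Rn 2 => v 1) (hp₂ x.1)
    simp only at this
    simp only [hbdef]
    rw [this]
    show γ₁ x.2 1 - (γ₂ x.1 1 + ((q₂ 1 : ℤ) : ℝ)) = _
    ring
  -- periodicity of φ
  have hper1 : ∀ x : ℝ × ℝ, φ (x.1, x.2 + 1) = φ x + 1 := by
    intro x
    simp only [hφdef, ha1 x, hb1 x]
    apply Complex.ext
    · simp only [Complex.add_re, Complex.ofReal_re, Complex.mul_re, Complex.I_re,
        Complex.ofReal_im, Complex.I_im, Complex.one_re]
      field_simp
      ring
    · simp only [Complex.add_im, Complex.ofReal_im, Complex.mul_im, Complex.I_re,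
        Complex.ofReal_re, Complex.I_im, Complex.one_im]
      field_simp
      ring
  have hper2 : ∀ x : ℝ × ℝ, φ (x.1 + 1, x.2) = φ x - I := by
    intro x
    simp only [hφdef, ha2 x, hb2 x]
    apply Complex.ext
    · simp only [Complex.sub_re, Complex.add_re, Complex.ofReal_re, Complex.mul_re,
        Complex.I_re, Complex.ofReal_im, Complex.I_im]
      field_simp
      ring
    · simp only [Complex.sub_im, Complex.add_im, Complex.ofReal_im, Complex.mul_im,
        Complex.I_re, Complex.ofReal_re, Complex.I_im]
      field_simp
      ring
  -- avoidance of lattice points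
  have hav : ∀ (x : ℝ × ℝ) (m n : ℤ), φ x ≠ (m : ℂ) + (n : ℂ) * I := by
    intro x m n heq
    rw [Complex.ext_iff] at heq
    obtain ⟨hre, him⟩ := heq
    simp only [hφdef, Complex.add_re, Complex.ofReal_re, Complex.mul_re, Complex.I_re,
      Complex.ofReal_im, Complex.I_im, Complex.add_im, Complex.mul_im,
      Complex.intCast_re, Complex.intCast_im] at hre him
    have hre' : (q₂ 1 : ℝ) * a x - (q₂ 0 : ℝ) * b x = d * m := by
      field_simp at hre
      linarith
    have him' : (q₁ 0 : ℝ) * b x - (q₁ 1 : ℝ) * a x = d * n := by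
      field_simp at him
      linarith
    have hax : a x = (m : ℝ) * q₁ 0 + (n : ℝ) * q₂ 0 := by
      have key : d * (a x - ((m : ℝ) * q₁ 0 + (n : ℝ) * q₂ 0)) = 0 := by
        rw [hddef] at hre' him' ⊢
        linear_combination (q₁ 0 : ℝ) * hre' + (q₂ 0 : ℝ) * him'
      rcases mul_eq_zero.mp key with h | h
      · exact absurd h hd
      · linarith
    have hbx : b x = (m : ℝ) * q₁ 1 + (n : ℝ) * q₂ 1 := by
      have key : d * (b x - ((m : ℝ) * q₁ 1 + (n : ℝ) * q₂ 1)) = 0 := by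
        rw [hddef] at hre' him' ⊢
        linear_combination (q₁ 1 : ℝ) * hre' + (q₂ 1 : ℝ) * him'
      rcases mul_eq_zero.mp key with h | h
      · exact absurd h hd
      · linarith
    apply hcon x.1 x.2 (fun i => m * q₁ i + n * q₂ i)
    ext i
    fin_cases i
    · show γ₁ x.2 0 - γ₂ x.1 0 = ((m * q₁ 0 + n * q₂ 0 : ℤ) : ℝ)
      push_cast
      simp only [hadef] at hax
      linarith [hax]
    · show γ₁ x.2 1 - γ₂ x.1 1 = ((m * q₁ 1 + n * q₂ 1 : ℤ) : ℝ)
      push_cast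
      simp only [hbdef] at hbx
      linarith [hbx]
  -- periodic part
  set ψ : ℝ × ℝ → ℂ := fun x => φ x - (x.2 : ℂ) + (x.1 : ℂ) * I with hψdef
  have hψc : Continuous ψ := by
    apply Continuous.add
    · exact hφc.sub (Complex.continuous_ofReal.comp continuous_snd)
    · exact (Complex.continuous_ofReal.comp continuous_fst).mul continuous_const
  have hψ1 : ∀ (t : ℝ), Function.Periodic (fun s => ψ (s, t)) 1 := by
    intro t s
    simp only [hψdef]
    rw [show ((s + 1, t) : ℝ × ℝ) = ((s,t).1 + 1, (s,t).2) by rfl]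
    rw [hper2 (s, t)]
    push_cast
    ring
  have hψ2 : ∀ (s : ℝ), Function.Periodic (fun t => ψ (s, t)) 1 := by
    intro s t
    simp only [hψdef]
    rw [show ((s, t + 1) : ℝ × ℝ) = ((s,t).1, (s,t).2 + 1) by rfl]
    rw [hper1 (s, t)]
    push_cast
    ring
  -- bound on the unit square
  obtain ⟨C, hC⟩ := (isCompact_Icc.prod isCompact_Icc).exists_bound_of_continuousOn
    (s := Set.Icc (0:ℝ) 1 ×ˢ Set.Icc (0:ℝ) 1) hψc.continuousOn
  have hCb : ∀ x : ℝ × ℝ, ‖ψ x‖ ≤ C := by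
    intro x
    have e1 : ψ x = ψ (Int.fract x.1, Int.fract x.2) := by
      have s1 : ψ (x.1, x.2) = ψ (Int.fract x.1, x.2) := by
        have := (hψ1 x.2).sub_int_mul_eq (x := x.1) ⌊x.1⌋
        simp only [mul_one] at this
        rw [show Int.fract x.1 = x.1 - ⌊x.1⌋ from rfl]
        exact this.symm
      have s2 : ψ (Int.fract x.1, x.2) = ψ (Int.fract x.1, Int.fract x.2) := by
        have := (hψ2 (Int.fract x.1)).sub_int_mul_eq (x := x.2) ⌊x.2⌋
        simp only [mul_one] at this
        rw [show Int.fract x.2 = x.2 - ⌊x.2⌋ from rfl]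
        exact this.symm
      exact s1.trans s2
    rw [e1]
    apply hC
    constructor
    · exact ⟨Int.fract_nonneg _, (Int.fract_lt_one _).le⟩
    · exact ⟨Int.fract_nonneg _, (Int.fract_lt_one _).le⟩
  have hC0 : 0 ≤ C := le_trans (norm_nonneg _) (hCb (0,0))
  -- choose N and R
  set N : ℕ := ⌈C⌉₊ + 2 with hNdef
  have hNC : C + 2 ≤ (N : ℝ) := by
    have := Nat.le_ceil C
    push_cast [hNdef]
    linarith
  have hN0 : (0:ℝ) < N := by linarith
  set R : ℝ := 2 * (N : ℝ) with hRdef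
  have hR : 0 < R := by positivity
  -- the avoided map
  set F : ℝ × ℝ → ℂ := fun x => φ x - ((N : ℂ) - (N : ℂ) * I) with hFdef
  have hFc : Continuous F := hφc.sub continuous_const
  have h0 : ∀ x, F x ≠ 0 := by
    intro x hx
    apply hav x (N : ℤ) (-(N : ℤ))
    have : φ x = (N : ℂ) - (N : ℂ) * I := by
      have := sub_eq_zero.mp hx
      exact this
    rw [this]
    push_cast
    ring
  -- decomposition: φ x = x.2 - x.1 I + ψ x
  have hdec : ∀ x : ℝ × ℝ, φ x = (x.2 : ℂ) - (x.1 : ℂ) * I + ψ x := by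
    intro x
    simp only [hψdef]
    ring
  have hre : ∀ x : ℝ × ℝ, (F x).re = x.2 + (ψ x).re - N := by
    intro x
    simp only [hFdef, hdec x]
    simp [Complex.sub_re, Complex.add_re, Complex.mul_re]
  have him : ∀ x : ℝ × ℝ, (F x).im = -x.1 + (ψ x).im + N := by
    intro x
    simp only [hFdef, hdec x]
    simp [Complex.sub_im, Complex.add_im, Complex.mul_im]
  have habs_re : ∀ x : ℝ × ℝ, |(ψ x).re| ≤ C := fun x =>
    le_trans (Complex.abs_re_le_norm _) (hCb x)
  have habs_im : ∀ x : ℝ × ℝ, |(ψ x).im| ≤ C := fun x =>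
    le_trans (Complex.abs_im_le_norm _) (hCb x)
  -- edge estimates
  apply s17_no_avoid F hFc R hR h0
  · intro t ht
    rw [him (0, t)]
    have := abs_le.mp (habs_im (0, t))
    simp only
    linarith [this.1]
  · intro s hs
    rw [hre (s, R)]
    have := abs_le.mp (habs_re (s, R))
    simp only [hRdef]
    linarith [this.1]
  · intro t ht
    rw [him (R, t)]
    have := abs_le.mp (habs_im (R, t))
    simp only [hRdef]
    linarith [this.2]
  · intro s hs
    rw [hre (s, 0)]
    have := abs_le.mp (habs_re (s, 0))
    simp only
    linarith [this.2]
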